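/- (Extremality criterion, direction (iii)⇒(i).) Let ρ be a PPT state and H a Hermitian matrix, not a scalar multiple of ρ, such that the range of H is contained in the range of ρ and the range of H^Γ is contained in the range of ρ^Γ. Then there exists ε > 0 such that ρ − εH and ρ + εH are both PPT states (positive semidefinite with positive semidefinite partial transpose); in particular ρ is the sum of two non-proportional PPT states, so ρ is not extreme in the convex cone of PPT states. -/

import Mathlib

open Matrix
open scoped ComplexOrder

/-- Partial transpose with respect to the A system (in the standard basis). -/
noncomputable def ptranspose {M N : ℕ} (ρ : Matrix (Fin M × Fin N) (Fin M × Fin N) ℂ) :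
    Matrix (Fin M × Fin N) (Fin M × Fin N) ℂ :=
  Matrix.of fun p q => ρ (q.1, p.2) (p.1, q.2)

/-- Partial trace over the A system: the reduced operator ρ_B. -/
noncomputable def ptraceA {M N : ℕ} (ρ : Matrix (Fin M × Fin N) (Fin M × Fin N) ℂ) :
    Matrix (Fin N) (Fin N) ℂ :=
  Matrix.of fun j l => ∑ i, ρ (i, j) (i, l)

/-- Partial trace over the B system: the reduced operator ρ_A. -/
noncomputable def ptraceB {M N : ℕ} (ρ : Matrix (Fin M × Fin N) (Fin M × Fin N) ℂ) :
    Matrix (Fin M) (Fin M) ℂ :=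
  Matrix.of fun i k => ∑ j, ρ (i, j) (k, j)

/-!
Diagonalize `ρ = U D U*` with `D = diagonal d`, `d ≥ 0`. Since `ρ` and `H` are Hermitian,
`range H ⊆ range ρ` gives `ker ρ ⊆ ker H`, so the Hermitian matrix `U* H U` vanishes on every row
and column where `d` does. For small `|δ|` the matrix `D + δ U* H U` is therefore diagonally
dominant, hence positive semidefinite by Gershgorin's theorem. Doing this for `ρ` and for `ρ^Γ`
yields `ε > 0` with `ρ ± εH` PPT, and `ρ` is the sum of the PPT states `(ρ ± εH)/2`, which are
linearly independent because `ρ` and `H` are.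
-/

open Filter Topology

namespace Matrix

variable {𝕜 n : Type*} [RCLike 𝕜] [Fintype n] [DecidableEq n]

theorem IsHermitian.hasEigenvalue_eigenvalues {A : Matrix n n 𝕜} (hA : A.IsHermitian) (i : n) :
    Module.End.HasEigenvalue (toLin' A) (hA.eigenvalues i : 𝕜) := by
  refine Module.End.hasEigenvalue_of_hasEigenvector (x := (hA.eigenvectorBasis i).ofLp) ⟨?_, ?_⟩
  · rw [Module.End.mem_eigenspace_iff, toLin'_apply, hA.mulVec_eigenvectorBasis,
      RCLike.real_smul_eq_coe_smul (K := 𝕜)]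
  · exact (WithLp.ofLp_eq_zero 2).not.mpr (hA.eigenvectorBasis.orthonormal.ne_zero i)

theorem IsHermitian.posSemidef_of_sum_norm_le_re_diag {A : Matrix n n 𝕜} (hA : A.IsHermitian)
    (hdom : ∀ k, ∑ j ∈ Finset.univ.erase k, ‖A k j‖ ≤ RCLike.re (A k k)) : A.PosSemidef := by
  rw [hA.posSemidef_iff_eigenvalues_nonneg]
  intro i
  obtain ⟨k, hk⟩ := eigenvalue_mem_ball (hA.hasEigenvalue_eigenvalues i)
  rw [Metric.mem_closedBall, dist_eq_norm] at hk
  have hre : RCLike.re (A k k) - hA.eigenvalues i ≤ ‖(hA.eigenvalues i : 𝕜) - A k k‖ := by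
    simpa using (neg_le_abs _).trans (RCLike.abs_re_le_norm ((hA.eigenvalues i : 𝕜) - A k k))
  show 0 ≤ hA.eigenvalues i
  linarith [hdom k]

omit [DecidableEq n] in
theorem IsHermitian.ker_mulVecLin_le_of_range_le {ρ H : Matrix n n 𝕜} (hρ : ρ.IsHermitian)
    (hH : H.IsHermitian) (hr : LinearMap.range H.mulVecLin ≤ LinearMap.range ρ.mulVecLin) :
    LinearMap.ker ρ.mulVecLin ≤ LinearMap.ker H.mulVecLin := by
  intro x (hx : ρ *ᵥ x = 0)
  obtain ⟨w, hw⟩ := hr ⟨H *ᵥ x, rfl⟩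
  change ρ *ᵥ w = H *ᵥ (H *ᵥ x) at hw
  refine dotProduct_star_self_eq_zero.mp ?_
  calc star (H *ᵥ x) ⬝ᵥ H *ᵥ x = star x ⬝ᵥ ρ *ᵥ w := by
        rw [star_mulVec, hH.eq, ← dotProduct_mulVec, hw]
    _ = star (ρ *ᵥ x) ⬝ᵥ w := by rw [dotProduct_mulVec, star_mulVec, hρ.eq]
    _ = 0 := by rw [hx, star_zero, zero_dotProduct]

theorem eventually_posSemidef_diagonal_add_smul {d : n → ℝ} (hd : 0 ≤ d) {H : Matrix n n 𝕜}
    (hH : H.IsHermitian)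
    (hker : LinearMap.ker (diagonal (RCLike.ofReal ∘ d)).mulVecLin ≤ LinearMap.ker H.mulVecLin) :
    ∀ᶠ δ : ℝ in 𝓝 0, (diagonal (RCLike.ofReal ∘ d) + (δ : 𝕜) • H).PosSemidef := by
  have hrow : ∀ i, d i = 0 → ∑ j, ‖H i j‖ = 0 := fun i hi ↦ by
    have hcol : H *ᵥ Pi.single i 1 = 0 := hker (by simp [hi])
    refine Finset.sum_eq_zero fun j _ ↦ ?_
    rw [← hH.apply, norm_star, ← col_apply H i j, ← mulVec_single_one, hcol, Pi.zero_apply,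
      norm_zero]
  have hsmall : ∀ᶠ δ : ℝ in 𝓝 0, ∀ i, |δ| * ∑ j, ‖H i j‖ ≤ d i := by
    refine eventually_all.2 fun i ↦ ?_
    rcases (hd i).eq_or_lt with hi | hi
    · exact .of_forall fun δ ↦ by simp [← hi, hrow i hi.symm]
    · have hcont : Continuous fun δ : ℝ ↦ |δ| * ∑ j, ‖H i j‖ := by fun_prop
      exact ((hcont.tendsto' 0 0 (by simp)).eventually_lt_const hi).mono fun δ ↦ le_of_lt
  filter_upwards [hsmall] with δ hδ
  refine IsHermitian.posSemidef_of_sum_norm_le_re_diag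
    ((isHermitian_diagonal_of_self_adjoint _ ?_).add (hH.smul (RCLike.conj_ofReal δ))) fun k ↦ ?_
  · ext i; exact RCLike.conj_ofReal (d i)
  have hoff : ∑ j ∈ Finset.univ.erase k,
      ‖(diagonal (RCLike.ofReal ∘ d) + (δ : 𝕜) • H : Matrix n n 𝕜) k j‖ =
      |δ| * ∑ j ∈ Finset.univ.erase k, ‖H k j‖ := by
    rw [Finset.mul_sum]
    refine Finset.sum_congr rfl fun j hj ↦ ?_
    rw [add_apply, diagonal_apply_ne _ (Finset.ne_of_mem_erase hj).symm, zero_add, smul_apply,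
      norm_smul, RCLike.norm_ofReal]
  have hdiag : RCLike.re ((diagonal (RCLike.ofReal ∘ d) + (δ : 𝕜) • H : Matrix n n 𝕜) k k) =
      d k + δ * RCLike.re (H k k) := by
    simp [RCLike.smul_re]
  have hsum : |δ| * (∑ j ∈ Finset.univ.erase k, ‖H k j‖ + ‖H k k‖) ≤ d k :=
    Finset.sum_erase_add _ (fun j ↦ ‖H k j‖) (Finset.mem_univ k) ▸ hδ k
  have hre : -(δ * RCLike.re (H k k)) ≤ |δ| * ‖H k k‖ :=
    (neg_le_abs _).trans (by rw [abs_mul]; gcongr; exact RCLike.abs_re_le_norm _)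
  rw [hoff, hdiag]
  linarith [mul_add |δ| (∑ j ∈ Finset.univ.erase k, ‖H k j‖) ‖H k k‖]

theorem PosSemidef.eventually_posSemidef_add_smul {ρ H : Matrix n n 𝕜} (hρ : ρ.PosSemidef)
    (hH : H.IsHermitian) (hker : LinearMap.ker ρ.mulVecLin ≤ LinearMap.ker H.mulVecLin) :
    ∀ᶠ δ : ℝ in 𝓝 0, (ρ + (δ : 𝕜) • H).PosSemidef := by
  set U : Matrix n n 𝕜 := (hρ.isHermitian.eigenvectorUnitary : Matrix n n 𝕜)
  set D : Matrix n n 𝕜 := diagonal (RCLike.ofReal ∘ hρ.isHermitian.eigenvalues)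
  have hUU : star U * U = 1 := Unitary.coe_star_mul_self hρ.isHermitian.eigenvectorUnitary
  have hUU' : U * star U = 1 := Unitary.coe_mul_star_self hρ.isHermitian.eigenvectorUnitary
  have hspec : ρ = U * D * star U := hρ.isHermitian.spectral_theorem
  have hker' : LinearMap.ker D.mulVecLin ≤ LinearMap.ker (star U * H * U).mulVecLin := by
    intro x (hx : D *ᵥ x = 0)
    have hUx : ρ *ᵥ (U *ᵥ x) = 0 := by
      rw [hspec, mulVec_mulVec, mul_assoc, mul_assoc, hUU, mul_one, ← mulVec_mulVec, hx,
        mulVec_zero]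
    change (star U * H * U) *ᵥ x = 0
    rw [← mulVec_mulVec, ← mulVec_mulVec, show H *ᵥ (U *ᵥ x) = 0 from hker hUx, mulVec_zero]
  have hconj : ∀ δ : ℝ, ρ + (δ : 𝕜) • H = U * (D + (δ : 𝕜) • (star U * H * U)) * star U := by
    intro δ
    rw [mul_add, add_mul, ← hspec, mul_smul_comm, smul_mul_assoc]
    simp only [← mul_assoc, hUU', one_mul]
    rw [mul_assoc, hUU', mul_one]
  have hH' : (star U * H * U).IsHermitian := isHermitian_conjTranspose_mul_mul U hH
  filter_upwards [eventually_posSemidef_diagonal_add_smul (fun i ↦ hρ.eigenvalues_nonneg i)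
    hH' hker'] with δ hδ
  rw [hconj]
  exact hδ.mul_mul_conjTranspose_same U

end Matrix

theorem Filter.Eventually.exists_pos_and_neg {p : ℝ → Prop} (h : ∀ᶠ δ in 𝓝 0, p δ) :
    ∃ ε > 0, p ε ∧ p (-ε) := by
  have hneg : ∀ᶠ δ in 𝓝 0, p (-δ) := (continuous_neg.tendsto' 0 0 neg_zero).eventually h
  obtain ⟨ε, ⟨hp, hn⟩, hε⟩ := (((h.and hneg).filter_mono nhdsWithin_le_nhds).and
    (self_mem_nhdsWithin (s := Set.Ioi 0))).exists
  exact ⟨ε, hε, hp, hn⟩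

theorem LinearIndependent.pair_sub_smul_add_smul {K V : Type*} [Field K] [NeZero (2 : K)]
    [AddCommGroup V] [Module K V] {x y : V} (h : LinearIndependent K ![x, y]) {ε : K}
    (hε : ε ≠ 0) : LinearIndependent K ![x - ε • y, x + ε • y] := by
  have hdet : 1 * ε ≠ -ε * 1 := by
    rw [one_mul, mul_one, ne_eq, eq_neg_iff_add_eq_zero, ← two_mul]
    exact mul_ne_zero two_ne_zero hε
  simpa [sub_eq_add_neg] using
    (LinearIndependent.pair_add_smul_add_smul_iff (1 : K) (-ε) 1 ε).2 ⟨h, hdet⟩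

section PartialTranspose

variable {M N : ℕ}

theorem ptranspose_add (A B : Matrix (Fin M × Fin N) (Fin M × Fin N) ℂ) :
    ptranspose (A + B) = ptranspose A + ptranspose B := rfl

theorem ptranspose_smul (c : ℂ) (A : Matrix (Fin M × Fin N) (Fin M × Fin N) ℂ) :
    ptranspose (c • A) = c • ptranspose A := rfl

theorem Matrix.IsHermitian.ptranspose {A : Matrix (Fin M × Fin N) (Fin M × Fin N) ℂ}
    (hA : A.IsHermitian) : (ptranspose A).IsHermitian := by
  ext p q
  exact hA.apply _ _

def IsPPT (ρ : Matrix (Fin M × Fin N) (Fin M × Fin N) ℂ) : Prop :=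
  ρ.PosSemidef ∧ (ptranspose ρ).PosSemidef

theorem IsPPT.smul {ρ : Matrix (Fin M × Fin N) (Fin M × Fin N) ℂ} (hρ : IsPPT ρ) {c : ℂ}
    (hc : 0 ≤ c) : IsPPT (c • ρ) :=
  ⟨hρ.1.smul hc, by rw [ptranspose_smul]; exact hρ.2.smul hc⟩

theorem IsPPT.eventually_add_smul {ρ H : Matrix (Fin M × Fin N) (Fin M × Fin N) ℂ}
    (hρ : IsPPT ρ) (hH : H.IsHermitian)
    (hr : LinearMap.range H.mulVecLin ≤ LinearMap.range ρ.mulVecLin)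
    (hrΓ : LinearMap.range (ptranspose H).mulVecLin ≤
      LinearMap.range (ptranspose ρ).mulVecLin) :
    ∀ᶠ δ : ℝ in 𝓝 0, IsPPT (ρ + (δ : ℂ) • H) := by
  filter_upwards [hρ.1.eventually_posSemidef_add_smul hH
      (hρ.1.isHermitian.ker_mulVecLin_le_of_range_le hH hr),
    hρ.2.eventually_posSemidef_add_smul hH.ptranspose
      (hρ.2.isHermitian.ker_mulVecLin_le_of_range_le hH.ptranspose hrΓ)] with δ h hΓ
  exact ⟨h, by rwa [ptranspose_add, ptranspose_smul]⟩

end PartialTranspose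

/-- Extremality criterion, direction (iii) ⇒ (i): if H is Hermitian, not a scalar
multiple of the PPT state ρ, with range H ⊆ range ρ and range H^Γ ⊆ range ρ^Γ,
then for some ε > 0 both ρ ± εH are PPT states, and ρ is a sum of two
non-proportional PPT states (hence not extreme). -/
theorem not_extreme_of_hermitian_range_le (M N : ℕ)
    (ρ H : Matrix (Fin M × Fin N) (Fin M × Fin N) ℂ)
    (hρ0 : ρ ≠ 0) (hρ : ρ.PosSemidef) (hρΓ : (ptranspose ρ).PosSemidef)
    (hH : H.IsHermitian) (hprop : ¬ ∃ c : ℂ, H = c • ρ)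
    (hr : LinearMap.range H.mulVecLin ≤ LinearMap.range ρ.mulVecLin)
    (hrΓ : LinearMap.range (ptranspose H).mulVecLin ≤
      LinearMap.range (ptranspose ρ).mulVecLin) :
    (∃ ε : ℝ, 0 < ε ∧
      (ρ - (ε : ℂ) • H).PosSemidef ∧ (ptranspose (ρ - (ε : ℂ) • H)).PosSemidef ∧
      (ρ + (ε : ℂ) • H).PosSemidef ∧ (ptranspose (ρ + (ε : ℂ) • H)).PosSemidef) ∧
    ∃ ρ₁ ρ₂ : Matrix (Fin M × Fin N) (Fin M × Fin N) ℂ,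
      ρ₁ ≠ 0 ∧ ρ₁.PosSemidef ∧ (ptranspose ρ₁).PosSemidef ∧
      ρ₂ ≠ 0 ∧ ρ₂.PosSemidef ∧ (ptranspose ρ₂).PosSemidef ∧
      ρ = ρ₁ + ρ₂ ∧ ¬ ∃ c : ℂ, ρ₁ = c • ρ₂ := by
  obtain ⟨ε, hε, hplus, hminus⟩ :=
    (IsPPT.eventually_add_smul ⟨hρ, hρΓ⟩ hH hr hrΓ).exists_pos_and_neg
  rw [Complex.ofReal_neg, neg_smul, ← sub_eq_add_neg] at hminus
  have hεC : (ε : ℂ) ≠ 0 := Complex.ofReal_ne_zero.mpr hε.ne'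
  have hli : LinearIndependent ℂ ![ρ, H] :=
    (LinearIndependent.pair_iff' hρ0).2 fun a ha ↦ hprop ⟨a, ha.symm⟩
  have hli' : LinearIndependent ℂ
      ![(2⁻¹ : ℂ) • (ρ - (ε : ℂ) • H), (2⁻¹ : ℂ) • (ρ + (ε : ℂ) • H)] :=
    (LinearIndependent.pair_smul_iff (inv_ne_zero two_ne_zero)).2
      (hli.pair_sub_smul_add_smul hεC)
  obtain ⟨h₁, hΓ₁⟩ := hminus.smul (by positivity : (0 : ℂ) ≤ 2⁻¹)
  obtain ⟨h₂, hΓ₂⟩ := hplus.smul (by positivity : (0 : ℂ) ≤ 2⁻¹)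
  have hsum : ρ = (2⁻¹ : ℂ) • (ρ - (ε : ℂ) • H) + (2⁻¹ : ℂ) • (ρ + (ε : ℂ) • H) := by
    rw [← smul_add, sub_add_add_cancel, ← two_smul ℂ, smul_smul, inv_mul_cancel₀ two_ne_zero,
      one_smul]
  refine ⟨⟨ε, hε, hminus.1, hminus.2, hplus.1, hplus.2⟩, _, _, hli'.ne_zero 0, h₁, hΓ₁,
    hli'.ne_zero 1, h₂, hΓ₂, hsum, fun ⟨c, hc⟩ ↦ ?_⟩
  exact one_ne_zero (hli'.eq_zero_of_pair' (by rw [one_smul]; exact hc)).1
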